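/- arXiv:2501.04793 — 5 statements merged into one kernel-verified Lean document; each statement's English description precedes it below -/
import Mathlib

section
/- Suppose e_z : ℝ → ℝ satisfies e_z'(t) = -σ₀ * (|w(t)| / h(w(t))) * e_z(t), where σ₀ > 0, w : ℝ → ℝ is continuous, and 0 < C₁ ≤ h(w(t)) ≤ C₂ for all t. If |w(t)| ≥ α > 0 for all t ≥ 0, then |e_z(t)| ≤ |e_z(0)| * exp(-(σ₀ α / C₂) * t) for all t ≥ 0, i.e., the error dynamics is exponentially stable. -/
theorem stmt_1 (σ₀ C₁ C₂ α : ℝ) (hσ₀ : 0 < σ₀) (hC₁ : 0 < C₁) (hα : 0 < α)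
    (w h ez : ℝ → ℝ) (hw : Continuous w)
    (hh₁ : ∀ t, C₁ ≤ h (w t)) (hh₂ : ∀ t, h (w t) ≤ C₂)
    (hode : ∀ t, HasDerivAt ez (-σ₀ * (|w t| / h (w t)) * ez t) t)
    (hwα : ∀ t ≥ (0:ℝ), α ≤ |w t|) :
    ∀ t ≥ (0:ℝ), |ez t| ≤ |ez 0| * Real.exp (-(σ₀ * α / C₂) * t) := by
  have hC₂ : 0 < C₂ := lt_of_lt_of_le (hC₁.trans_le (hh₁ 0)) (hh₂ 0)
  set k : ℝ := σ₀ * α / C₂ with hk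
  have hkpos : 0 < k := by positivity
  set V : ℝ → ℝ := fun t => (ez t) ^ 2 * Real.exp (2 * k * t) with hV
  have hVderiv : ∀ t, HasDerivAt V
      ((2 * ez t * (-σ₀ * (|w t| / h (w t)) * ez t)) * Real.exp (2 * k * t)
        + (ez t) ^ 2 * ((2 * k) * Real.exp (2 * k * t))) t := by
    intro t
    have h1 : HasDerivAt (fun t => (ez t) ^ 2) (2 * ez t * (-σ₀ * (|w t| / h (w t)) * ez t)) t := by
      have : HasDerivAt (fun t => (ez t) ^ 2) _ t := (hode t).pow 2
      simpa [mul_comm, mul_assoc, mul_left_comm] using this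
    have h2 : HasDerivAt (fun t => Real.exp (2 * k * t)) ((2 * k) * Real.exp (2 * k * t)) t := by
      have := (((hasDerivAt_id t).const_mul (2 * k))).exp
      simpa [mul_comm] using this
    have h3 : HasDerivAt V _ t := h1.mul h2
    simpa using h3
  have hmono : AntitoneOn V (Set.Ici (0 : ℝ)) := by
    apply antitoneOn_of_deriv_nonpos (convex_Ici 0)
    · exact fun t _ => ((hVderiv t).continuousAt).continuousWithinAt
    · intro t ht
      exact ((hVderiv t).differentiableAt).differentiableWithinAt
    · intro t ht
      rw [interior_Ici] at ht
      rw [(hVderiv t).deriv]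
      have ht0 : (0:ℝ) ≤ t := le_of_lt ht
      have hht : 0 < h (w t) := hC₁.trans_le (hh₁ t)
      have hrate : k ≤ σ₀ * (|w t| / h (w t)) := by
        rw [hk]
        rw [div_le_iff₀ hC₂]
        rw [mul_comm (σ₀ * (|w t| / h (w t))) C₂]
        have h1 : σ₀ * α ≤ σ₀ * |w t| := by
          exact mul_le_mul_of_nonneg_left (hwα t ht0) hσ₀.le
        have h2 : σ₀ * |w t| = σ₀ * (|w t| / h (w t)) * h (w t) := by
          field_simp
        have h3 : σ₀ * (|w t| / h (w t)) * h (w t) ≤ σ₀ * (|w t| / h (w t)) * C₂ := by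
          apply mul_le_mul_of_nonneg_left (hh₂ t)
          positivity
        calc σ₀ * α ≤ σ₀ * |w t| := h1
          _ = σ₀ * (|w t| / h (w t)) * h (w t) := h2
          _ ≤ σ₀ * (|w t| / h (w t)) * C₂ := h3
          _ = C₂ * (σ₀ * (|w t| / h (w t))) := by ring
      have hexp : 0 < Real.exp (2 * k * t) := Real.exp_pos _
      have hsq : 0 ≤ (ez t) ^ 2 := sq_nonneg _
      nlinarith [mul_nonneg hsq hexp.le, mul_le_mul_of_nonneg_right
        (mul_le_mul_of_nonneg_left hrate hsq) hexp.le]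
  intro t ht
  have hVle : V t ≤ V 0 := hmono (Set.self_mem_Ici) ht ht
  have hV0 : V 0 = (ez 0) ^ 2 := by simp [hV]
  have hVt : V t = (ez t) ^ 2 * Real.exp (2 * k * t) := rfl
  have hexp : 0 < Real.exp (k * t) := Real.exp_pos _
  have hsq : (ez t) ^ 2 ≤ ((ez 0) * Real.exp (-(k * t))) ^ 2 := by
    have h2 : Real.exp (2 * k * t) = (Real.exp (k * t)) ^ 2 := by
      rw [← Real.exp_nat_mul]; ring_nf
    have h3 : ((ez 0) * Real.exp (-(k * t))) ^ 2 = (ez 0)^2 / (Real.exp (k*t))^2 := by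
      rw [Real.exp_neg]; field_simp
    rw [h3, le_div_iff₀ (by positivity)]
    calc (ez t)^2 * (Real.exp (k*t))^2 = V t := by rw [hVt, h2]
      _ ≤ V 0 := hVle
      _ = (ez 0)^2 := hV0
  have habs : |ez t| ≤ |ez 0 * Real.exp (-(k * t))| := by
    have := hsq
    nlinarith [abs_nonneg (ez t), abs_nonneg (ez 0 * Real.exp (-(k * t))), sq_abs (ez t), sq_abs (ez 0 * Real.exp (-(k * t)))]
  calc |ez t| ≤ |ez 0 * Real.exp (-(k * t))| := habs
    _ = |ez 0| * Real.exp (-(k * t)) := by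
        rw [abs_mul, abs_of_pos (Real.exp_pos _)]
    _ = |ez 0| * Real.exp (-k * t) := by ring_nf
end

section
/- Suppose e_z : ℝ → ℝ satisfies e_z'(t) = -σ₀ (|w(t)|/h(w(t))) e_z(t), with σ₀ > 0, w continuous, and 0 < C₁ ≤ h(w(t)) ≤ C₂. If there exist T > 0 and β > 0 such that ∫_t^{t+T} |w(τ)| dτ ≥ β for all t ≥ 0, then e_z(t) → 0 as t → ∞; moreover for each n ∈ ℕ, |e_z(nT)| ≤ |e_z(0)| * exp(-n σ₀ β / C₂). -/
theorem stmt_3 (σ₀ C₁ C₂ T β : ℝ) (hσ₀ : 0 < σ₀) (hC₁ : 0 < C₁)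
    (hT : 0 < T) (hβ : 0 < β)
    (w h ez : ℝ → ℝ) (hw : Continuous w)
    (hh₁ : ∀ t, C₁ ≤ h (w t)) (hh₂ : ∀ t, h (w t) ≤ C₂)
    (hode : ∀ t, HasDerivAt ez (-σ₀ * (|w t| / h (w t)) * ez t) t)
    (hpe : ∀ t ≥ (0:ℝ), β ≤ ∫ τ in t..(t + T), |w τ|) :
    Filter.Tendsto ez Filter.atTop (nhds 0) ∧
    ∀ n : ℕ, |ez (n * T)| ≤ |ez 0| * Real.exp (-(n * σ₀ * β / C₂)) := by
  have hC₂ : 0 < C₂ := lt_of_lt_of_le hC₁ ((hh₁ 0).trans (hh₂ 0))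
  set c : ℝ := σ₀ / C₂ with hc
  have hcpos : 0 < c := div_pos hσ₀ hC₂
  set W : ℝ → ℝ := fun t => ∫ τ in (0:ℝ)..t, |w τ| with hWdef
  have hwabs : Continuous fun τ => |w τ| := hw.abs
  have hW : ∀ t, HasDerivAt W (|w t|) t := fun t =>
    intervalIntegral.integral_hasDerivAt_right (hwabs.intervalIntegrable 0 t)
      (hwabs.stronglyMeasurableAtFilter _ _) hwabs.continuousAt
  have hWmono : Monotone W :=
    monotone_of_deriv_nonneg (fun t => (hW t).differentiableAt)
      (fun t => by rw [(hW t).deriv]; exact abs_nonneg _)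
  -- F t = ez t ^ 2 * exp (2 c W t) is antitone
  set F : ℝ → ℝ := fun t => ez t ^ 2 * Real.exp (2 * c * W t) with hFdef
  have hF : ∀ t, HasDerivAt F
      ((2 * ez t * (-σ₀ * (|w t| / h (w t)) * ez t)) * Real.exp (2 * c * W t)
        + ez t ^ 2 * (Real.exp (2 * c * W t) * (2 * c * |w t|))) t := by
    intro t
    have h1 : HasDerivAt (fun t => ez t ^ 2) (2 * ez t * (-σ₀ * (|w t| / h (w t)) * ez t)) t := by
      have := (hode t).fun_pow 2
      simpa [mul_comm, mul_assoc, mul_left_comm] using this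
    have h2 : HasDerivAt (fun t => Real.exp (2 * c * W t))
        (Real.exp (2 * c * W t) * (2 * c * |w t|)) t := ((hW t).const_mul (2 * c)).exp
    exact h1.mul h2
  have hFderiv_nonpos : ∀ t, deriv F t ≤ 0 := by
    intro t
    rw [(hF t).deriv]
    have hhpos : 0 < h (w t) := lt_of_lt_of_le hC₁ (hh₁ t)
    have hle : σ₀ * |w t| / C₂ ≤ σ₀ * |w t| / h (w t) :=
      div_le_div_of_nonneg_left (by positivity) hhpos (hh₂ t)
    have hexp : 0 < Real.exp (2 * c * W t) := Real.exp_pos _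
    have hsq : 0 ≤ ez t ^ 2 := sq_nonneg _
    have key : (2 * ez t * (-σ₀ * (|w t| / h (w t)) * ez t))
        + ez t ^ 2 * (2 * c * |w t|) ≤ 0 := by
      have : (2 * ez t * (-σ₀ * (|w t| / h (w t)) * ez t))
          + ez t ^ 2 * (2 * c * |w t|)
          = 2 * ez t ^ 2 * (σ₀ * |w t| / C₂ - σ₀ * |w t| / h (w t)) := by
        rw [hc]
        field_simp
        ring
      rw [this]
      exact mul_nonpos_of_nonneg_of_nonpos (by positivity) (by linarith)
    calc (2 * ez t * (-σ₀ * (|w t| / h (w t)) * ez t)) * Real.exp (2 * c * W t)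
          + ez t ^ 2 * (Real.exp (2 * c * W t) * (2 * c * |w t|))
        = ((2 * ez t * (-σ₀ * (|w t| / h (w t)) * ez t))
            + ez t ^ 2 * (2 * c * |w t|)) * Real.exp (2 * c * W t) := by ring
      _ ≤ 0 * Real.exp (2 * c * W t) := by
          exact mul_le_mul_of_nonneg_right key hexp.le
      _ = 0 := by ring
  have hFanti : Antitone F :=
    antitone_of_deriv_nonpos (fun t => (hF t).differentiableAt) hFderiv_nonpos
  have hW0 : W 0 = 0 := intervalIntegral.integral_same
  -- bound: for t ≥ 0, |ez t| ≤ |ez 0| * exp (-(c * W t))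
  have hbound : ∀ t, 0 ≤ t → |ez t| ≤ |ez 0| * Real.exp (-(c * W t)) := by
    intro t ht
    have hFle : F t ≤ F 0 := hFanti ht
    have h0 : F 0 = ez 0 ^ 2 := by simp [hFdef, hW0]
    have hsq : ez t ^ 2 ≤ (|ez 0| * Real.exp (-(c * W t))) ^ 2 := by
      have he : (|ez 0| * Real.exp (-(c * W t))) ^ 2
          = ez 0 ^ 2 * Real.exp (-(2 * c * W t)) := by
        rw [mul_pow, sq_abs, ← Real.exp_nat_mul]
        ring_nf
      rw [he]
      have hexp : 0 < Real.exp (2 * c * W t) := Real.exp_pos _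
      rw [Real.exp_neg, ← div_eq_mul_inv, le_div_iff₀ hexp]
      calc ez t ^ 2 * Real.exp (2 * c * W t) = F t := rfl
        _ ≤ F 0 := hFle
        _ = ez 0 ^ 2 := h0
    have := Real.sqrt_le_sqrt hsq
    rwa [Real.sqrt_sq_eq_abs, Real.sqrt_sq (by positivity)] at this
  -- W (n T) ≥ n β
  have hWn : ∀ n : ℕ, (n : ℝ) * β ≤ W ((n : ℝ) * T) := by
    intro n
    induction n with
    | zero => simp [hW0]
    | succ n ih =>
      have hn0 : (0:ℝ) ≤ (n : ℝ) * T := by positivity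
      have hadd : W ((n : ℝ) * T) + ∫ τ in ((n:ℝ)*T)..((n:ℝ)*T + T), |w τ|
          = W ((n:ℝ)*T + T) := by
        exact intervalIntegral.integral_add_adjacent_intervals
          (hwabs.intervalIntegrable _ _) (hwabs.intervalIntegrable _ _)
      have hpe' := hpe ((n:ℝ)*T) hn0
      have : ((n:ℝ) + 1) * β ≤ W ((n:ℝ)*T + T) := by
        rw [← hadd]; push_cast; linarith
      have heq : ((n:ℕ)+1 : ℝ) * T = (n:ℝ)*T + T := by push_cast; ring
      push_cast
      rw [heq]
      push_cast at this
      linarith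
  constructor
  · -- Tendsto
    have hWtop : Filter.Tendsto W Filter.atTop Filter.atTop := by
      apply hWmono.tendsto_atTop_atTop
      intro b
      obtain ⟨n, hn⟩ := exists_nat_ge (b / β)
      refine ⟨(n:ℝ) * T, le_trans ?_ (hWn n)⟩
      calc b = b / β * β := by field_simp
        _ ≤ (n:ℝ) * β := by exact mul_le_mul_of_nonneg_right hn hβ.le
    have hexp0 : Filter.Tendsto (fun t => |ez 0| * Real.exp (-(c * W t)))
        Filter.atTop (nhds 0) := by
      have h1 : Filter.Tendsto (fun t => -(c * W t)) Filter.atTop Filter.atBot := by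
        apply Filter.tendsto_neg_atTop_atBot.comp
        exact hWtop.const_mul_atTop hcpos
      have := Real.tendsto_exp_atBot.comp h1
      simpa using this.const_mul |ez 0|
    apply squeeze_zero_norm' _ hexp0
    filter_upwards [Filter.eventually_ge_atTop (0:ℝ)] with t ht
    simpa [Real.norm_eq_abs] using hbound t ht
  · intro n
    have h1 := hbound ((n:ℝ) * T) (by positivity)
    have h2 : Real.exp (-(c * W ((n:ℝ)*T))) ≤ Real.exp (-((n:ℝ) * σ₀ * β / C₂)) := by
      apply Real.exp_le_exp.mpr
      have := hWn n
      have : c * ((n:ℝ) * β) ≤ c * W ((n:ℝ)*T) := mul_le_mul_of_nonneg_left this hcpos.le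
      have he : c * ((n:ℝ) * β) = (n:ℝ) * σ₀ * β / C₂ := by
        rw [hc]; field_simp
      linarith [he ▸ this]
    calc |ez ((n:ℝ)*T)| ≤ |ez 0| * Real.exp (-(c * W ((n:ℝ)*T))) := h1
      _ ≤ |ez 0| * Real.exp (-((n:ℝ) * σ₀ * β / C₂)) :=
          mul_le_mul_of_nonneg_left h2 (abs_nonneg _)
end

section
/- Suppose e_z'(t) = -σ₀ (|w(t)|/h(w(t))) e_z(t) with σ₀ > 0, 0 < C₁ ≤ h(w(t)) ≤ C₂, and w ∈ L¹([0,∞)). Then e_z(t) converges to a finite limit L with |L| ≥ |e_z(0)| * exp(-σ₀ ‖w‖₁ / C₁); in particular if e_z(0) ≠ 0 then e_z does not tend to 0, so the error dynamics is not asymptotically stable. -/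
open MeasureTheory Filter Real Set

theorem stmt_6 (σ₀ C₁ C₂ : ℝ) (hσ₀ : 0 < σ₀) (hC₁ : 0 < C₁)
    (w h ez : ℝ → ℝ) (hw : Continuous w)
    (hh₁ : ∀ t, C₁ ≤ h (w t)) (hh₂ : ∀ t, h (w t) ≤ C₂)
    (hode : ∀ t, HasDerivAt ez (-σ₀ * (|w t| / h (w t)) * ez t) t)
    (hL1 : MeasureTheory.IntegrableOn w (Set.Ici 0)) :
    ∃ L : ℝ, Filter.Tendsto ez Filter.atTop (nhds L) ∧
      |ez 0| * Real.exp (-(σ₀ * (∫ τ in Set.Ici (0:ℝ), |w τ|) / C₁)) ≤ |L| ∧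
      (ez 0 ≠ 0 → ¬ Filter.Tendsto ez Filter.atTop (nhds 0)) := by
  set g : ℝ → ℝ := fun t => σ₀ * (|w t| / h (w t)) with hgdef
  set b : ℝ → ℝ := fun t => σ₀ / C₁ * |w t| with hbdef
  have hb_cont : Continuous b := continuous_const.mul hw.abs
  have hh0 : ∀ t, 0 < h (w t) := fun t => lt_of_lt_of_le hC₁ (hh₁ t)
  have hg0 : ∀ t, 0 ≤ g t := fun t =>
    mul_nonneg hσ₀.le (div_nonneg (abs_nonneg _) (hh0 t).le)
  have hgb : ∀ t, g t ≤ b t := by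
    intro t
    have h1 : |w t| / h (w t) ≤ |w t| / C₁ :=
      div_le_div_of_nonneg_left (abs_nonneg _) hC₁ (hh₁ t)
    calc g t ≤ σ₀ * (|w t| / C₁) := mul_le_mul_of_nonneg_left h1 hσ₀.le
      _ = b t := by rw [hbdef]; ring
  set I : ℝ := ∫ τ in Set.Ici (0:ℝ), |w τ| with hIdef
  set M : ℝ := σ₀ * I / C₁ with hMdef
  have hwabs : IntegrableOn (fun t => |w t|) (Set.Ici (0:ℝ)) := hL1.abs
  set B : ℝ → ℝ := fun t => ∫ τ in (0:ℝ)..t, b τ with hBdef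
  have hB : ∀ t, HasDerivAt B (b t) t := fun t =>
    intervalIntegral.integral_hasDerivAt_right (hb_cont.intervalIntegrable _ _)
      hb_cont.aestronglyMeasurable.stronglyMeasurableAtFilter hb_cont.continuousAt
  have hB0 : B 0 = 0 := by simp [hBdef]
  have hBM : ∀ t, 0 ≤ t → B t ≤ M := by
    intro t ht
    have h1 : B t = σ₀ / C₁ * ∫ τ in (0:ℝ)..t, |w τ| := by
      rw [hBdef]; simp [hbdef, intervalIntegral.integral_const_mul]
    have h2 : (∫ τ in (0:ℝ)..t, |w τ|) ≤ I := by
      rw [intervalIntegral.integral_of_le ht, hIdef]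
      exact setIntegral_mono_set hwabs
        (Filter.Eventually.of_forall fun x => abs_nonneg _)
        (HasSubset.Subset.eventuallyLE (fun x hx => le_of_lt hx.1))
    rw [h1, hMdef]
    calc σ₀ / C₁ * ∫ τ in (0:ℝ)..t, |w τ| ≤ σ₀ / C₁ * I :=
          mul_le_mul_of_nonneg_left h2 (div_nonneg hσ₀.le hC₁.le)
      _ = σ₀ * I / C₁ := by ring
  set u : ℝ → ℝ := fun t => ez t ^ 2 with hudef
  have hu0 : ∀ t, 0 ≤ u t := fun t => sq_nonneg _
  have hu : ∀ t, HasDerivAt u (-2 * g t * u t) t := by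
    intro t
    have h1 := (hode t).pow 2
    convert h1 using 1
    · rfl
    · rfl
    · rfl
    simp only [hudef, hgdef, Nat.cast_ofNat, pow_one]
    ring
  have hez_cont : Continuous ez :=
    continuous_iff_continuousAt.mpr fun t => (hode t).continuousAt
  -- V = u * exp(2B) is monotone
  set V : ℝ → ℝ := fun t => u t * Real.exp (2 * B t) with hVdef
  have hV : ∀ t, HasDerivAt V
      ((-2 * g t * u t) * Real.exp (2 * B t)
        + u t * (Real.exp (2 * B t) * (2 * b t))) t := by
    intro t
    exact (hu t).mul ((Real.hasDerivAt_exp _).comp t ((hB t).const_mul 2))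
  have hVmono : Monotone V := by
    apply monotone_of_deriv_nonneg (fun t => ((hV t).differentiableAt : _))
    intro t
    rw [(hV t).deriv]
    have heq : (-2 * g t * u t) * Real.exp (2 * B t)
        + u t * (Real.exp (2 * B t) * (2 * b t))
        = 2 * (b t - g t) * u t * Real.exp (2 * B t) := by ring
    rw [heq]
    exact mul_nonneg (mul_nonneg (mul_nonneg (by norm_num)
      (sub_nonneg.mpr (hgb t))) (hu0 t)) (Real.exp_nonneg _)
  set c : ℝ := u 0 * Real.exp (-(2 * M)) with hcdef
  have hclow : ∀ t, 0 ≤ t → c ≤ u t := by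
    intro t ht
    have hV0 : V 0 = u 0 := by simp [hVdef, hB0]
    have h1 : u 0 ≤ u t * Real.exp (2 * B t) := hV0 ▸ hVmono ht
    have h2 : u 0 * Real.exp (-(2 * B t)) ≤ u t := by
      calc u 0 * Real.exp (-(2 * B t))
          ≤ (u t * Real.exp (2 * B t)) * Real.exp (-(2 * B t)) :=
            mul_le_mul_of_nonneg_right h1 (Real.exp_nonneg _)
        _ = u t := by rw [mul_assoc, ← Real.exp_add]; simp
    refine le_trans ?_ h2
    exact mul_le_mul_of_nonneg_left
      (Real.exp_le_exp.mpr (by linarith [hBM t ht])) (hu0 0)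
  have huanti : Antitone u := by
    apply antitone_of_deriv_nonpos (fun t => (hu t).differentiableAt)
    intro t
    rw [(hu t).deriv]
    nlinarith [hg0 t, hu0 t]
  have hbdd : BddBelow (Set.range u) := ⟨0, by rintro x ⟨t, rfl⟩; exact hu0 t⟩
  set ℓ : ℝ := ⨅ t, u t with hldef
  have hℓ : Tendsto u atTop (nhds ℓ) := tendsto_atTop_ciInf huanti hbdd
  have hℓc : c ≤ ℓ :=
    ge_of_tendsto hℓ (Filter.eventually_atTop.mpr ⟨0, fun t ht => hclow t ht⟩)
  have hcsq : c = (|ez 0| * Real.exp (-M)) ^ 2 := by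
    have hexp : Real.exp (-M) ^ 2 = Real.exp (-(2 * M)) := by
      rw [← Real.exp_nat_mul]; norm_num
    rw [hcdef, mul_pow, sq_abs, hexp]
  have hsqrtc : Real.sqrt c = |ez 0| * Real.exp (-M) := by
    rw [hcsq]
    exact Real.sqrt_sq (mul_nonneg (abs_nonneg _) (Real.exp_nonneg _))
  have hsqrtle : |ez 0| * Real.exp (-M) ≤ Real.sqrt ℓ := by
    rw [← hsqrtc]; exact Real.sqrt_le_sqrt hℓc
  by_cases hez0 : ez 0 = 0
  · refine ⟨0, ?_, by simp [hez0], fun hne => absurd hez0 hne⟩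
    have hzero : ∀ t, 0 ≤ t → ez t = 0 := by
      intro t ht
      have h1 : u t ≤ u 0 := huanti ht
      have h2 : u 0 = 0 := by simp [hudef, hez0]
      have : u t = 0 := le_antisymm (h2 ▸ h1) (hu0 t)
      exact pow_eq_zero_iff (two_ne_zero) |>.mp this
    refine Filter.Tendsto.congr' ?_ (tendsto_const_nhds (α := ℝ) (x := 0))
    filter_upwards [Filter.eventually_ge_atTop (0:ℝ)] with t ht
    exact (hzero t ht).symm
  · have hcpos : 0 < c := by
      rw [hcdef, hudef]
      exact mul_pos (pow_pos (abs_pos.mpr hez0) 2 |>.trans_le (by rw [sq_abs]))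
        (Real.exp_pos _)
    have hne : ∀ t, 0 ≤ t → ez t ≠ 0 := by
      intro t ht hzz
      have : u t = 0 := by simp [hudef, hzz]
      linarith [hclow t ht]
    have hsame : ∀ t, 0 ≤ t → 0 < ez 0 * ez t := by
      intro t ht
      by_contra hq
      push_neg at hq
      have hlt : ez 0 * ez t < 0 :=
        lt_of_le_of_ne hq (mul_ne_zero hez0 (hne t ht))
      have hmem : (0:ℝ) ∈ Set.uIcc (ez 0) (ez t) := by
        rcases mul_neg_iff.mp hlt with ⟨h1, h2⟩ | ⟨h1, h2⟩
        · exact Set.mem_uIcc.mpr (Or.inr ⟨h2.le, h1.le⟩)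
        · exact Set.mem_uIcc.mpr (Or.inl ⟨h1.le, h2.le⟩)
      obtain ⟨x, hx, hx0⟩ := intermediate_value_uIcc (hez_cont.continuousOn) hmem
      rw [Set.uIcc_of_le ht] at hx
      exact hne x hx.1 hx0
    set s : ℝ := if 0 < ez 0 then 1 else -1 with hsdef
    have hrep : ∀ t, 0 ≤ t → ez t = s * Real.sqrt (u t) := by
      intro t ht
      have hsq : Real.sqrt (u t) = |ez t| := Real.sqrt_sq_eq_abs _
      by_cases hp : 0 < ez 0
      · have hpt : 0 < ez t := by
          rcases mul_pos_iff.mp (hsame t ht) with ⟨_, h2⟩ | ⟨h1, _⟩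
          · exact h2
          · linarith
        simp [hsdef, hp, hsq, abs_of_pos hpt]
      · have hn0 : ez 0 < 0 := lt_of_le_of_ne (not_lt.mp hp) hez0
        have hnt : ez t < 0 := by
          rcases mul_pos_iff.mp (hsame t ht) with ⟨h1, _⟩ | ⟨_, h2⟩
          · linarith
          · exact h2
        simp [hsdef, hp, hsq, abs_of_neg hnt]
    refine ⟨s * Real.sqrt ℓ, ?_, ?_, ?_⟩
    · have h1 : Tendsto (fun t => s * Real.sqrt (u t)) atTop
          (nhds (s * Real.sqrt ℓ)) :=
        ((Real.continuous_sqrt.tendsto ℓ).comp hℓ).const_mul s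
      refine h1.congr' ?_
      filter_upwards [Filter.eventually_ge_atTop (0:ℝ)] with t ht
      exact (hrep t ht).symm
    · have habs : |s * Real.sqrt ℓ| = Real.sqrt ℓ := by
        rw [abs_mul, abs_of_nonneg (Real.sqrt_nonneg _)]
        by_cases hp : 0 < ez 0 <;> simp [hsdef, hp]
      rw [habs]
      exact hsqrtle
    · intro _ hT0
      have h1 : Tendsto ez atTop (nhds (s * Real.sqrt ℓ)) := by
        have h1 : Tendsto (fun t => s * Real.sqrt (u t)) atTop
            (nhds (s * Real.sqrt ℓ)) :=
          ((Real.continuous_sqrt.tendsto ℓ).comp hℓ).const_mul s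
        refine h1.congr' ?_
        filter_upwards [Filter.eventually_ge_atTop (0:ℝ)] with t ht
        exact (hrep t ht).symm
      have heq0 : s * Real.sqrt ℓ = 0 := tendsto_nhds_unique h1 hT0
      have hLpos : 0 < Real.sqrt ℓ :=
        lt_of_lt_of_le (Real.sqrt_pos.mpr hcpos) (Real.sqrt_le_sqrt hℓc)
      have hs1 : s ≠ 0 := by
        by_cases hp : 0 < ez 0 <;> simp [hsdef, hp]
      exact (mul_ne_zero hs1 hLpos.ne') heq0
end

section
/- Consider the error system ė_z = -σ₀ (|w|/h(w)) e_z - K₁ e_w, ė_w = -(σ₀/J) e_z + (σ₀σ₁/J)(|w|/h(w)) e_z - K₃ e_w, where K₁ = (Cσ₀/(AJ))(σ₁ |w|/h(w) - 1) (time-varying) and K₃ = α/J with constants A, C, σ₀, σ₁, J, α > 0 and h(w(t)) > 0. Then V(t) = A e_z(t)² + C e_w(t)² satisfies V'(t) = -2Aσ₀ (|w(t)|/h(w(t))) e_z(t)² - 2C(α/J) e_w(t)² ≤ 0 for all t. -/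
theorem stmt_8 (σ₀ σ₁ J A C α : ℝ)
    (hσ₀ : 0 < σ₀) (hσ₁ : 0 < σ₁) (hJ : 0 < J) (hA : 0 < A) (hC : 0 < C) (hα : 0 < α)
    (w h ez ew : ℝ → ℝ) (hh : ∀ t, 0 < h (w t))
    (K₁ : ℝ → ℝ) (hK₁ : ∀ t, K₁ t = C * σ₀ / (A * J) * (σ₁ * |w t| / h (w t) - 1))
    (K₃ : ℝ) (hK₃ : K₃ = α / J)
    (hez : ∀ t, HasDerivAt ez (-σ₀ * (|w t| / h (w t)) * ez t - K₁ t * ew t) t)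
    (hew : ∀ t, HasDerivAt ew
      (-(σ₀ / J) * ez t + (σ₀ * σ₁ / J) * (|w t| / h (w t)) * ez t - K₃ * ew t) t)
    (V : ℝ → ℝ) (hV : ∀ t, V t = A * ez t ^ 2 + C * ew t ^ 2) :
    ∀ t, HasDerivAt V
        (-2 * A * σ₀ * (|w t| / h (w t)) * ez t ^ 2 - 2 * C * (α / J) * ew t ^ 2) t ∧
      -2 * A * σ₀ * (|w t| / h (w t)) * ez t ^ 2 - 2 * C * (α / J) * ew t ^ 2 ≤ 0 := by
  intro t
  have hne : h (w t) ≠ 0 := (hh t).ne'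
  constructor
  · have hVfun : V = fun t => A * ez t ^ 2 + C * ew t ^ 2 := funext hV
    rw [hVfun]
    have h1 := (((hez t).pow 2).const_mul A).add (((hew t).pow 2).const_mul C)
    convert h1 using 1
    · rfl
    · rfl
    · rfl
    rw [hK₁ t, hK₃]
    field_simp
    ring
  · have t1 : -2 * A * σ₀ * (|w t| / h (w t)) * ez t ^ 2 ≤ 0 := by
      have : 0 ≤ 2 * A * σ₀ * (|w t| / h (w t)) * ez t ^ 2 := by
        have := hh t
        positivity
      linarith
    have t2 : -2 * C * (α / J) * ew t ^ 2 ≤ 0 := by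
      have : 0 ≤ 2 * C * (α / J) * ew t ^ 2 := by positivity
      linarith
    linarith
end

section
/- Consider the error dynamics ė_z = -σ₀ g(t) e_z - K₁ e_w, ė_w = -(σ₀/J) e_z + (σ₀σ₁/J) g(t) e_z - K₃ e_w, where g(t) = |w(t)|/h(w(t)) ≥ 0, and constants chosen as B = 2Cσ₁/J, A = Bσ₁/(2J) + β/2, K₁ = -2C(σ₁α+σ₀)/(βJ), K₃ = -σ₁K₁/J + α with C, α, β, σ₀, σ₁, J > 0. Then V = A e_z² + B e_z e_w + C e_w² satisfies V' = -σ₀ β g(t) e_z² - (Bσ₀/J) e_z² - 2Cα e_w² ≤ -(Bσ₀/J) e_z² - 2Cα e_w². -/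
theorem stmt_14 (C α β σ₀ σ₁ J : ℝ)
    (hC : 0 < C) (hα : 0 < α) (hβ : 0 < β) (hσ₀ : 0 < σ₀) (hσ₁ : 0 < σ₁) (hJ : 0 < J)
    (B A K₁ K₃ : ℝ)
    (hB : B = 2 * C * σ₁ / J) (hA : A = B * σ₁ / (2 * J) + β / 2)
    (hK₁ : K₁ = -2 * C * (σ₁ * α + σ₀) / (β * J))
    (hK₃ : K₃ = -σ₁ * K₁ / J + α)
    (g ez ew : ℝ → ℝ) (hg : Continuous g) (hg0 : ∀ t, 0 ≤ g t)
    (hez : ∀ t, HasDerivAt ez (-σ₀ * g t * ez t - K₁ * ew t) t)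
    (hew : ∀ t, HasDerivAt ew
      (-(σ₀ / J) * ez t + (σ₀ * σ₁ / J) * g t * ez t - K₃ * ew t) t)
    (V : ℝ → ℝ)
    (hV : ∀ t, V t = A * ez t ^ 2 + B * ez t * ew t + C * ew t ^ 2) :
    ∀ t, HasDerivAt V
        (-σ₀ * β * g t * ez t ^ 2 - (B * σ₀ / J) * ez t ^ 2 - 2 * C * α * ew t ^ 2) t ∧
      -σ₀ * β * g t * ez t ^ 2 - (B * σ₀ / J) * ez t ^ 2 - 2 * C * α * ew t ^ 2 ≤
        -(B * σ₀ / J) * ez t ^ 2 - 2 * C * α * ew t ^ 2 := by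
  intro t
  constructor
  · have hVe : V = fun t => A * ez t ^ 2 + B * ez t * ew t + C * ew t ^ 2 :=
      funext hV
    rw [hVe]
    have hz := hez t
    have hw := hew t
    have h1 := ((((hz.pow 2).const_mul A).add
      ((hz.const_mul B).mul hw)).add ((hw.pow 2).const_mul C))
    refine (h1 : HasDerivAt (fun t => A * ez t ^ 2 + B * ez t * ew t + C * ew t ^ 2) _ t).congr_deriv ?_
    have hJ' : J ≠ 0 := ne_of_gt hJ
    have hβ' : β ≠ 0 := ne_of_gt hβ
    subst hB hA hK₁ hK₃
    field_simp
    ring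
  · have h : 0 ≤ σ₀ * β * g t * ez t ^ 2 := by
      have := hg0 t; positivity
    linarith
end
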